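/- arXiv:1501.03924 — 6 statements merged into one kernel-verified Lean document; each statement's English description precedes it below -/
import Mathlib

section
/- Let p be a prime, s a positive integer, q = p^s, R = Z_q[u]/(u^2), and r a positive integer. Let g ∈ F_p[X] be a monic irreducible polynomial dividing X^{p^r−1} − 1 in F_p[X]. Then there exists a unique monic polynomial f ∈ R[X] such that the coefficientwise reduction of f modulo (p,u) equals g and f divides X^{p^r−1} − 1 in R[X]; moreover any such f is basic irreducible. -/
/-!
Reduction `R → 𝔽_p` is surjective with nilpotent kernel, and `X ^ (p ^ r - 1) - 1` is separable
over `𝔽_p` because `p ^ r - 1 = -1` there. So `g` is coprime to its cofactor, and Hensel lifting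
of coprime factorizations modulo a nilpotent ideal gives a monic lift of `g` dividing
`X ^ (p ^ r - 1) - 1`. If `G₁, G₂` are two such lifts and `G₂ * H = X ^ (p ^ r - 1) - 1`, then
`G₁` and `H` are coprime, because coprimality lifts along a nilpotent kernel; hence `G₁ ∣ G₂`, and
being monic of the same degree they coincide.
-/

open Polynomial

/-- The reduction map `R = Z_q[u]/(u^2) → F_p` sending `a + b·u` to `a mod p`. -/
noncomputable def dualRed (p s : ℕ) (hs : 0 < s) :
    DualNumber (ZMod (p ^ s)) →+* ZMod p :=
  (ZMod.castHom (dvd_pow_self p hs.ne') (ZMod p)).comp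
    (TrivSqZeroExt.fstHom (ZMod (p ^ s)) (ZMod (p ^ s)) (ZMod (p ^ s))).toRingHom

theorem IsCoprime.of_map {S T : Type*} [CommRing S] [CommRing T] {π : S →+* T}
    (hπ : Function.Surjective π) (hker : IsNilpotent (RingHom.ker π)) {a b : S}
    (h : IsCoprime (π a) (π b)) : IsCoprime a b := by
  obtain ⟨u, v, huv⟩ := h
  obtain ⟨u, rfl⟩ := hπ u
  obtain ⟨v, rfl⟩ := hπ v
  obtain ⟨n, hn⟩ := hker
  have hmem : u * a + v * b - 1 ∈ RingHom.ker π := by simp [RingHom.mem_ker, huv]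
  have hnil : IsNilpotent (u * a + v * b - 1) :=
    ⟨n, by simpa [hn] using Ideal.pow_mem_pow hmem n⟩
  obtain ⟨w, hw⟩ := hnil.isUnit_add_one
  rw [sub_add_cancel] at hw
  exact ⟨↑w⁻¹ * u, ↑w⁻¹ * v, by rw [mul_assoc, mul_assoc, ← mul_add, ← hw, Units.inv_mul]⟩

namespace Polynomial

section HenselLifting

variable {S : Type*} [CommRing S] {I : Ideal S}

theorem mem_map_C_iff_map_mk_eq_zero {a : S[X]} :
    a ∈ I.map C ↔ a.map (Ideal.Quotient.mk I) = 0 := by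
  have h := ker_mapRingHom (Ideal.Quotient.mk I)
  rw [Ideal.mk_ker] at h
  rw [← h, RingHom.mem_ker, coe_mapRingHom]

theorem modByMonic_mem_map_C {a q : S[X]} (hq : q.Monic) (ha : a ∈ I.map C) :
    a %ₘ q ∈ I.map C := by
  rw [mem_map_C_iff_map_mk_eq_zero] at ha ⊢
  rw [map_modByMonic _ hq, ha, zero_modByMonic]

theorem divByMonic_mem_map_C {a q : S[X]} (hq : q.Monic) (ha : a ∈ I.map C) :
    a /ₘ q ∈ I.map C := by
  rw [mem_map_C_iff_map_mk_eq_zero] at ha ⊢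
  rw [map_divByMonic _ hq, ha, zero_divByMonic]

theorem isNilpotent_map_C (hI : IsNilpotent I) : IsNilpotent (I.map (C : S →+* S[X])) := by
  obtain ⟨n, hn⟩ := hI
  exact ⟨n, by rw [← Ideal.map_pow, hn, Ideal.zero_eq_bot, Ideal.map_bot, Ideal.zero_eq_bot]⟩

theorem exists_monic_factor_step [Nontrivial S] {F G H A B : S[X]} {m : ℕ} (hm : m ≠ 0)
    (hG : G.Monic) (hAB : A * G + B * H - 1 ∈ I.map C) (hF : F - G * H ∈ I.map C ^ m) :
    ∃ G' H' : S[X], G'.Monic ∧ G' - G ∈ I.map C ^ m ∧ H' - H ∈ I.map C ^ m ∧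
      F - G' * H' ∈ I.map C ^ (m + 1) := by
  set E := F - G * H
  have hBE : B * E ∈ (I ^ m).map C := by
    rw [Ideal.map_pow]
    exact Ideal.mul_mem_left _ _ hF
  have hr : B * E %ₘ G ∈ I.map C ^ m := by
    rw [← Ideal.map_pow]
    exact modByMonic_mem_map_C hG hBE
  have hQ : B * E /ₘ G ∈ I.map C ^ m := by
    rw [← Ideal.map_pow]
    exact divByMonic_mem_map_C hG hBE
  set r := B * E %ₘ G
  set Q := B * E /ₘ G
  have hK : A * E + Q * H ∈ I.map C ^ m :=
    add_mem (Ideal.mul_mem_left _ _ hF) (Ideal.mul_mem_right _ _ hQ)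
  -- `δG = r`, `δH = A * E + Q * H` solve `H * δG + G * δH ≡ E` mod `I ^ (m + 1)`; `deg r < deg G`.
  have key : F - (G + r) * (H + (A * E + Q * H)) =
      E * -(A * G + B * H - 1) - r * (A * E + Q * H) := by
    linear_combination (-H) * modByMonic_add_div (B * E) G
  refine ⟨G + r, H + (A * E + Q * H), hG.add_of_left (degree_modByMonic_lt _ hG),
    by simpa using hr, by simpa using hK, ?_⟩
  rw [key, pow_succ]
  exact sub_mem (Ideal.mul_mem_mul hF (neg_mem hAB))
    (Ideal.mul_mem_mul hr (Ideal.pow_le_self hm hK))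

theorem exists_monic_factor_mod_pow [Nontrivial S] {F G H A B : S[X]} (hG : G.Monic)
    (hAB : A * G + B * H - 1 ∈ I.map C) (hF : F - G * H ∈ I.map C) (m : ℕ) :
    ∃ G' H' : S[X], G'.Monic ∧ G' - G ∈ I.map C ∧ H' - H ∈ I.map C ∧
      F - G' * H' ∈ I.map C ^ (m + 1) := by
  induction m with
  | zero => exact ⟨G, H, hG, by simp, by simp, by simpa using hF⟩
  | succ m ih =>
    obtain ⟨G₁, H₁, hG₁, hGG₁, hHH₁, hF₁⟩ := ih
    have hAB₁ : A * G₁ + B * H₁ - 1 ∈ I.map C := by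
      have : A * G₁ + B * H₁ - 1 = (A * G + B * H - 1) + A * (G₁ - G) + B * (H₁ - H) := by ring
      rw [this]
      exact add_mem (add_mem hAB (Ideal.mul_mem_left _ _ hGG₁)) (Ideal.mul_mem_left _ _ hHH₁)
    obtain ⟨G₂, H₂, hG₂, hGG₂, hHH₂, hF₂⟩ :=
      exists_monic_factor_step m.succ_ne_zero hG₁ hAB₁ hF₁
    have hle := Ideal.pow_le_self (I := I.map C) m.succ_ne_zero
    exact ⟨G₂, H₂, hG₂, sub_add_sub_cancel G₂ G₁ G ▸ add_mem (hle hGG₂) hGG₁,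
      sub_add_sub_cancel H₂ H₁ H ▸ add_mem (hle hHH₂) hHH₁, hF₂⟩

theorem exists_monic_dvd_of_isNilpotent [Nontrivial S] {F G H A B : S[X]} (hI : IsNilpotent I)
    (hG : G.Monic) (hAB : A * G + B * H - 1 ∈ I.map C) (hF : F - G * H ∈ I.map C) :
    ∃ G' : S[X], G'.Monic ∧ G' - G ∈ I.map C ∧ G' ∣ F := by
  obtain ⟨n, hn⟩ := isNilpotent_map_C hI
  obtain ⟨G', H', hG', hGG', -, hF'⟩ := exists_monic_factor_mod_pow hG hAB hF n
  rw [Ideal.zero_eq_bot] at hn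
  have hbot : I.map C ^ (n + 1) ≤ ⊥ := hn ▸ Ideal.pow_le_pow_right n.le_succ
  exact ⟨G', hG', hGG', H', sub_eq_zero.mp (Ideal.mem_bot.mp (hbot hF'))⟩

end HenselLifting

section NilpotentKernel

variable {S T : Type*} [CommRing S] [CommRing T] {π : S →+* T}

theorem map_eq_iff_sub_mem_map_C {P Q : S[X]} :
    P.map π = Q.map π ↔ P - Q ∈ (RingHom.ker π).map C := by
  rw [← ker_mapRingHom, RingHom.mem_ker, map_sub, sub_eq_zero, coe_mapRingHom]

variable [Nontrivial T] (hπ : Function.Surjective π) (hker : IsNilpotent (RingHom.ker π))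
include hπ hker

theorem exists_monic_lift_dvd {F : S[X]} {g h : T[X]} (hg : g.Monic) (hgh : g * h = F.map π)
    (hcop : IsCoprime g h) : ∃ G : S[X], G.Monic ∧ G.map π = g ∧ G ∣ F := by
  have := hπ.nontrivial
  have hmap := map_surjective π hπ
  obtain ⟨G₀, hG₀, -, hG₀m⟩ := lifts_and_degree_eq_and_monic ((mem_lifts g).mpr (hmap g)) hg
  obtain ⟨H₀, rfl⟩ := hmap h
  obtain ⟨a, b, hab⟩ := hcop
  obtain ⟨A, rfl⟩ := hmap a
  obtain ⟨B, rfl⟩ := hmap b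
  have hAB : A * G₀ + B * H₀ - 1 ∈ (RingHom.ker π).map C := by
    rw [← map_eq_iff_sub_mem_map_C]
    simp [Polynomial.map_add, Polynomial.map_mul, hG₀, hab]
  have hF : F - G₀ * H₀ ∈ (RingHom.ker π).map C := by
    rw [← map_eq_iff_sub_mem_map_C, Polynomial.map_mul, hG₀, hgh]
  obtain ⟨G, hG, hGG₀, hGF⟩ := exists_monic_dvd_of_isNilpotent hker hG₀m hAB hF
  exact ⟨G, hG, (map_eq_iff_sub_mem_map_C.mpr hGG₀).trans hG₀, hGF⟩

theorem eq_of_monic_of_map_eq_of_dvd {F G₁ G₂ : S[X]} (hsep : (F.map π).Separable)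
    (h₁ : G₁.Monic) (h₂ : G₂.Monic) (hmap : G₁.map π = G₂.map π) (hd₁ : G₁ ∣ F)
    (hd₂ : G₂ ∣ F) : G₁ = G₂ := by
  obtain ⟨H, rfl⟩ := hd₂
  have hker' : IsNilpotent (RingHom.ker (mapRingHom π)) := by
    rw [ker_mapRingHom]
    exact isNilpotent_map_C hker
  have hcop : IsCoprime G₁ H := by
    refine IsCoprime.of_map (map_surjective π hπ) hker' ?_
    rw [coe_mapRingHom, hmap]
    exact Separable.isCoprime (by rwa [← Polynomial.map_mul])
  refine (eq_of_monic_of_dvd_of_natDegree_le h₁ h₂ (hcop.dvd_of_dvd_mul_right hd₁) ?_).symm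
  rw [← h₁.natDegree_map π, ← h₂.natDegree_map π, hmap]

theorem existsUnique_monic_lift_dvd {F : S[X]} (hsep : (F.map π).Separable) {g : T[X]}
    (hg : g.Monic) (hgF : g ∣ F.map π) : ∃! G : S[X], G.Monic ∧ G.map π = g ∧ G ∣ F := by
  obtain ⟨h, hh⟩ := hgF
  obtain ⟨G, hG⟩ := exists_monic_lift_dvd hπ hker hg hh.symm (hh ▸ hsep).isCoprime
  exact ⟨G, hG, fun G' hG' => eq_of_monic_of_map_eq_of_dvd hπ hker hsep hG'.1 hG.1
    (hG'.2.1.trans hG.2.1.symm) hG'.2.2 hG.2.2⟩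

end NilpotentKernel

end Polynomial

theorem separable_X_pow_pow_sub_one_sub_one {K : Type*} [Field K] (p : ℕ) [CharP K p]
    (hp : p ≠ 0) {r : ℕ} (hr : r ≠ 0) : (X ^ (p ^ r - 1) - 1 : K[X]).Separable := by
  rw [X_pow_sub_one_separable_iff, Nat.cast_sub (Nat.one_le_pow _ _ (Nat.pos_of_ne_zero hp)),
    Nat.cast_pow, CharP.cast_eq_zero, zero_pow hr, Nat.cast_one, zero_sub, neg_ne_zero]
  exact one_ne_zero

theorem ZMod.isNilpotent_of_castHom_eq_zero {p s : ℕ} [NeZero p] (hs : s ≠ 0) {a : ZMod (p ^ s)}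
    (ha : ZMod.castHom (dvd_pow_self p hs) (ZMod p) a = 0) : IsNilpotent a := by
  rw [ZMod.castHom_apply, ZMod.cast_eq_val, ZMod.natCast_eq_zero_iff] at ha
  obtain ⟨t, ht⟩ := ha
  refine ⟨s, ?_⟩
  rw [← ZMod.natCast_zmod_val a, ht, ← Nat.cast_pow, mul_pow, Nat.cast_mul, ZMod.natCast_self,
    zero_mul]

section DualRed

variable (p s : ℕ) (hs : 0 < s)

theorem dualRed_surjective : Function.Surjective (dualRed p s hs) :=
  ZMod.ringHom_surjective _

theorem isNilpotent_ker_dualRed [NeZero p] : IsNilpotent (RingHom.ker (dualRed p s hs)) := by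
  have : Finite (DualNumber (ZMod (p ^ s))) :=
    inferInstanceAs (Finite (ZMod (p ^ s) × ZMod (p ^ s)))
  refine (Ideal.FG.isNilpotent_iff_le_nilradical (IsNoetherian.noetherian _)).mpr fun x hx => ?_
  rw [mem_nilradical, TrivSqZeroExt.isNilpotent_iff_isNilpotent_fst]
  exact ZMod.isNilpotent_of_castHom_eq_zero hs.ne' hx

end DualRed

theorem hensel_lift_exists_unique (p s r : ℕ) [Fact p.Prime] (hs : 0 < s) (hr : 0 < r)
    (g : Polynomial (ZMod p)) (hgm : g.Monic) (hgi : Irreducible g)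
    (hgd : g ∣ X ^ (p ^ r - 1) - 1) :
    (∃! f : Polynomial (DualNumber (ZMod (p ^ s))),
      f.Monic ∧ f.map (dualRed p s hs) = g ∧ f ∣ X ^ (p ^ r - 1) - 1) ∧
    (∀ f : Polynomial (DualNumber (ZMod (p ^ s))),
      f.Monic ∧ f.map (dualRed p s hs) = g ∧ f ∣ X ^ (p ^ r - 1) - 1 →
        f.Monic ∧ Irreducible (f.map (dualRed p s hs))) := by
  have hsep : ((X ^ (p ^ r - 1) - 1 : (DualNumber (ZMod (p ^ s)))[X]).map
      (dualRed p s hs)).Separable := by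
    simpa using separable_X_pow_pow_sub_one_sub_one p (Fact.out : p.Prime).ne_zero hr.ne'
  refine ⟨existsUnique_monic_lift_dvd (dualRed_surjective p s hs)
    (isNilpotent_ker_dualRed p s hs) hsep hgm (by simpa using hgd),
    fun f hf => ⟨hf.1, hf.2.1 ▸ hgi⟩⟩
end

section
/- Let p be a prime, s a positive integer, q = p^s, R = Z_q[u]/(u^2), and let f ∈ R[X] be a basic irreducible polynomial. Set S = R[X]/(f). Then an element r ∈ S is a unit of S if and only if r does not lie in the ideal of S generated by the images of the constants p and u. -/
/-!
The reduction `R → 𝔽_p` has kernel `(p, u)`, a nil ideal since `p ^ s = 0` and `u ^ 2 = 0`; so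
`J = (p, u) S` is nil as well. Moreover `S / J ≅ 𝔽_p[X] / (f̄)` is a field because `f̄` is
irreducible, so `J` is maximal. Being nil, `J` lies in every maximal ideal, hence is the only one:
`S` is local with maximal ideal `J`, and its units are exactly the elements outside `J`.
-/

open Polynomial

theorem ZMod.ker_castHom {m n : ℕ} (h : m ∣ n) :
    RingHom.ker (ZMod.castHom h (ZMod m)) = Ideal.span {(m : ZMod n)} := by
  have hcomp : (ZMod.castHom h (ZMod m)).comp (Int.castRingHom (ZMod n)) =
      Int.castRingHom (ZMod m) := RingHom.ext_int _ _
  rw [← Ideal.map_comap_of_surjective (Int.castRingHom (ZMod n)) ZMod.intCast_surjective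
      (RingHom.ker _), RingHom.comap_ker, hcomp, ZMod.ker_intCastRingHom, Ideal.map_span, Set.image_singleton,
    eq_intCast, Int.cast_natCast]

theorem DualNumber.ker_comp_fstHom {A B : Type*} [CommRing A] [Semiring B] (ψ : A →+* B) :
    RingHom.ker (ψ.comp (TrivSqZeroExt.fstHom A A A).toRingHom) =
      (RingHom.ker ψ).map (TrivSqZeroExt.inlHom A A) ⊔ Ideal.span {DualNumber.eps} := by
  apply le_antisymm
  · intro x hx
    rw [← TrivSqZeroExt.inl_fst_add_inr_snd_eq x]
    refine Submodule.add_mem_sup (Ideal.mem_map_of_mem _ hx) (Ideal.mem_span_singleton.mpr ?_)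
    exact DualNumber.fst_eq_zero_iff_eps_dvd.mp rfl
  · refine sup_le (Ideal.map_le_iff_le_comap.mpr fun a ha => ha) ?_
    rw [Ideal.span_le, Set.singleton_subset_iff, SetLike.mem_coe, RingHom.mem_ker]
    exact map_zero ψ

theorem ker_dualRed (p s : ℕ) (hs : 0 < s) :
    RingHom.ker (dualRed p s hs) =
      Ideal.span {(p : DualNumber (ZMod (p ^ s))), DualNumber.eps} := by
  rw [dualRed, DualNumber.ker_comp_fstHom, ZMod.ker_castHom, Ideal.map_span, Set.image_singleton,
    map_natCast, Ideal.span_insert]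

theorem ker_dualRed_le_nilradical (p s : ℕ) (hs : 0 < s) :
    RingHom.ker (dualRed p s hs) ≤ nilradical (DualNumber (ZMod (p ^ s))) := by
  rw [ker_dualRed, Ideal.span_le]
  rintro _ (rfl | rfl)
  · exact mem_nilradical.mpr ⟨s, by rw [← Nat.cast_pow, ← TrivSqZeroExt.inl_natCast,
      ZMod.natCast_self, TrivSqZeroExt.inl_zero]⟩
  · exact mem_nilradical.mpr DualNumber.isNilpotent_eps

theorem Ideal.map_le_nilradical {R S : Type*} [CommRing R] [CommRing S] (f : R →+* S)
    {I : Ideal R} (hI : I ≤ nilradical R) : I.map f ≤ nilradical S :=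
  Ideal.map_le_iff_le_comap.mpr <| hI.trans fun _ hx =>
    mem_nilradical.mpr ((mem_nilradical.mp hx).map f)

theorem AdjoinRoot.isMaximal_map_ker {R K : Type*} [CommRing R] [Field K] {φ : R →+* K}
    (hφ : Function.Surjective φ) {f : R[X]} (hf : Irreducible (f.map φ)) :
    ((RingHom.ker φ).map (of f)).IsMaximal := by
  have := Fact.mk hf
  let e : AdjoinRoot f ⧸ (RingHom.ker φ).map (of f) ≃+* AdjoinRoot (f.map φ) :=
    (quotAdjoinRootEquivQuotPolynomialQuot _ f).trans
      (mapRingEquiv (RingHom.quotientKerEquivOfSurjective hφ) _ _ <| by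
        rw [Polynomial.map_map]; rfl)
  exact Ideal.Quotient.maximal_of_isField _ (e.toMulEquiv.isField (Field.toIsField _))

theorem Ideal.IsMaximal.isUnit_iff_notMem_of_le_nilradical {R : Type*} [CommRing R]
    {J : Ideal R} (hJ : J.IsMaximal) (hnil : J ≤ nilradical R) {r : R} :
    IsUnit r ↔ r ∉ J := by
  refine ⟨fun hu hr => hJ.ne_top (J.eq_top_of_isUnit_mem hr hu), fun hr => ?_⟩
  by_contra hu
  obtain ⟨M, hM, hrM⟩ := exists_max_ideal_of_mem_nonunits hu
  have hJM : J = M := hJ.eq_of_le hM.ne_top (hnil.trans (nilradical_le_prime M))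
  exact hr (hJM ▸ hrM)

theorem unit_iff_not_mem_pu_general (p s : ℕ) [Fact p.Prime] (hs : 0 < s)
    (f : Polynomial (DualNumber (ZMod (p ^ s))))
    (hfi : Irreducible (f.map (dualRed p s hs)))
    (r : AdjoinRoot f) :
    IsUnit r ↔ r ∉ Ideal.span
      {AdjoinRoot.mk f (C ((p : DualNumber (ZMod (p ^ s))))),
       AdjoinRoot.mk f (C (DualNumber.eps : DualNumber (ZMod (p ^ s))))} := by
  have hJ : Ideal.span {AdjoinRoot.mk f (C ((p : DualNumber (ZMod (p ^ s))))),
      AdjoinRoot.mk f (C DualNumber.eps)} =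
        (RingHom.ker (dualRed p s hs)).map (AdjoinRoot.of f) := by
    rw [ker_dualRed, Ideal.map_span, Set.image_pair]
    rfl
  rw [hJ]
  have hmax := AdjoinRoot.isMaximal_map_ker (ZMod.ringHom_surjective (dualRed p s hs)) hfi
  exact hmax.isUnit_iff_notMem_of_le_nilradical
    (Ideal.map_le_nilradical _ (ker_dualRed_le_nilradical p s hs))

/-- Units of `S = R[X]/(f)` (for `f` basic irreducible) are exactly the elements
outside the ideal generated by (the images of) `p` and `u`. -/
theorem unit_iff_not_mem_pu (p s : ℕ) [Fact p.Prime] (hs : 0 < s)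
    (f : Polynomial (DualNumber (ZMod (p ^ s))))
    (hfm : f.Monic) (hfi : Irreducible (f.map (dualRed p s hs)))
    (r : AdjoinRoot f) :
    IsUnit r ↔ r ∉ Ideal.span
      {AdjoinRoot.mk f (C ((p : DualNumber (ZMod (p ^ s))))),
       AdjoinRoot.mk f (C (DualNumber.eps : DualNumber (ZMod (p ^ s))))} :=
  unit_iff_not_mem_pu_general p s hs f hfi r
end

section
/- Let p be a prime, s an integer with s ≥ 2, q = p^s, and R = Z_q[u]/(u^2). Then the principal ideals (p) and (u) of R are incomparable (neither is contained in the other), so R is not a chain ring; moreover the ideal (p, u) of R is not a principal ideal, so R is not a principal ideal ring. -/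
/-!
Write elements of `R[ε]` as `a + bε`. Elements of `(ε)` have `a = 0`, and `ε ∈ (p)` would make `p`
a unit, so `(p)` and `(ε)` are incomparable. If `(p, ε) = (g)`, write `ε = g c` and `p = g d`;
comparing components gives `g₀ c₀ = 0` and `g₀ c₁ + g₁ c₀ = 1`, so
`p = g₀ d₀ (g₀ c₁ + g₁ c₀) = g₀² d₀ c₁`, and `p ∣ g₀` then gives `p² ∣ p`. In `ℤ/p^s` the element
`p` is nilpotent, and a nilpotent `r = r² t` vanishes because `r t` is idempotent and nilpotent;
but `p ≠ 0` when `s ≥ 2`.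
-/

open TrivSqZeroExt DualNumber

theorem IsNilpotent.eq_zero_of_sq_dvd_self {R : Type*} [CommSemiring R] {r : R}
    (hr : IsNilpotent r) (h : r ^ 2 ∣ r) : r = 0 := by
  obtain ⟨t, ht⟩ := h
  have idem : IsIdempotentElem (r * t) := by
    calc r * t * (r * t) = r ^ 2 * t * t := by ring
      _ = r * t := by rw [← ht]
  have hrt : r * t = 0 := idem.eq_zero_of_isNilpotent ((Commute.all r t).isNilpotent_mul_right hr)
  calc r = r ^ 2 * t := ht
    _ = r * (r * t) := by ring
    _ = 0 := by rw [hrt, mul_zero]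

namespace DualNumber

variable {R : Type*} [CommRing R]

theorem mem_span_eps_iff {x : R[ε]} : x ∈ Ideal.span {ε} ↔ x.fst = 0 := by
  rw [Ideal.mem_span_singleton, fst_eq_zero_iff_eps_dvd]

theorem isUnit_of_inl_dvd_eps {r : R} (h : inl r ∣ (ε : R[ε])) : IsUnit r := by
  obtain ⟨c, hc⟩ := h
  exact .of_mul_eq_one _ (by simpa using (congrArg snd hc).symm)

theorem sq_fst_dvd_fst_of_dvd_of_dvd_eps {g x : R[ε]} (hx : g ∣ x) (hε : g ∣ ε) :
    g.fst ^ 2 ∣ x.fst := by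
  obtain ⟨d, rfl⟩ := hx
  obtain ⟨c, hc⟩ := hε
  have h0 : g.fst * c.fst = 0 := by simpa using (congrArg fst hc).symm
  have h1 : g.fst * c.snd + g.snd * c.fst = 1 := by simpa using (congrArg snd hc).symm
  refine ⟨d.fst * c.snd, ?_⟩
  calc (g * d).fst = g.fst * d.fst * (g.fst * c.snd + g.snd * c.fst) := by simp [h1]
    _ = g.fst ^ 2 * (d.fst * c.snd) + (g.fst * c.fst) * (d.fst * g.snd) := by ring
    _ = g.fst ^ 2 * (d.fst * c.snd) := by rw [h0, zero_mul, add_zero]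

theorem sq_fst_dvd_fst_of_isPrincipal_span {x : R[ε]} (h : (Ideal.span {x, ε}).IsPrincipal) :
    x.fst ^ 2 ∣ x.fst := by
  obtain ⟨g, hg⟩ := h
  have hg : Ideal.span {x, ε} = Ideal.span {g} := hg
  have mem (y : R[ε]) (hy : y ∈ Ideal.span {x, ε}) : g ∣ y := by
    rwa [hg, Ideal.mem_span_singleton] at hy
  have hxg : x.fst ∣ g.fst := by
    obtain ⟨a, _, hab⟩ := Ideal.mem_span_pair.mp (hg ▸ Ideal.mem_span_singleton_self g)
    exact ⟨a.fst, by simp [← hab, mul_comm]⟩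
  calc x.fst ^ 2 ∣ g.fst ^ 2 := pow_dvd_pow_of_dvd hxg 2
    _ ∣ x.fst := sq_fst_dvd_fst_of_dvd_of_dvd_eps (mem x (Ideal.subset_span (by simp)))
        (mem ε (Ideal.subset_span (by simp)))

end DualNumber

theorem ZMod.isNilpotent_natCast_of_pow (p s : ℕ) : IsNilpotent (p : ZMod (p ^ s)) :=
  ⟨s, by rw [← Nat.cast_pow, ZMod.natCast_self]⟩

theorem ZMod.natCast_ne_zero_of_pow {p s : ℕ} (hp : 1 < p) (hs : 2 ≤ s) :
    (p : ZMod (p ^ s)) ≠ 0 := by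
  rw [Ne, ZMod.natCast_eq_zero_iff]
  intro h
  have := (Nat.pow_dvd_pow_iff_le_right (k := s) (l := 1) hp).mp (by rwa [pow_one])
  omega

/-- For `s ≥ 2`, in `R = Z_q[u]/(u^2)` the ideals `(p)` and `(u)` are incomparable
(so `R` is not a chain ring), and `(p, u)` is not principal (so `R` is not a
principal ideal ring). -/
theorem dualNumber_zmod_not_chain_not_principal (p s : ℕ) [Fact p.Prime] (hs : 2 ≤ s) :
    ¬ (Ideal.span {(p : DualNumber (ZMod (p ^ s)))} ≤
        Ideal.span {(DualNumber.eps : DualNumber (ZMod (p ^ s)))}) ∧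
    ¬ (Ideal.span {(DualNumber.eps : DualNumber (ZMod (p ^ s)))} ≤
        Ideal.span {(p : DualNumber (ZMod (p ^ s)))}) ∧
    ¬ (∀ I J : Ideal (DualNumber (ZMod (p ^ s))), I ≤ J ∨ J ≤ I) ∧
    ¬ (Ideal.span {(p : DualNumber (ZMod (p ^ s))),
        (DualNumber.eps : DualNumber (ZMod (p ^ s)))}).IsPrincipal ∧
    ¬ IsPrincipalIdealRing (DualNumber (ZMod (p ^ s))) := by
  have hp : 1 < p := (Fact.out : p.Prime).one_lt
  have hnil := ZMod.isNilpotent_natCast_of_pow p s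
  have hne := ZMod.natCast_ne_zero_of_pow hp hs
  have : Nontrivial (ZMod (p ^ s)) := ZMod.nontrivial_iff.mpr (Nat.one_lt_pow (by omega) hp).ne'
  have hp_eps : ¬ Ideal.span {(p : DualNumber (ZMod (p ^ s)))} ≤ Ideal.span {ε} := fun h =>
    hne (by simpa using mem_span_eps_iff.mp (h (Ideal.mem_span_singleton_self _)))
  have heps_p : ¬ Ideal.span {ε} ≤ Ideal.span {(p : DualNumber (ZMod (p ^ s)))} := fun h =>
    hnil.not_isUnit <| isUnit_of_inl_dvd_eps <| by
      rw [inl_natCast, ← Ideal.mem_span_singleton]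
      exact h (Ideal.mem_span_singleton_self _)
  have hnot_principal :
      ¬ (Ideal.span {(p : DualNumber (ZMod (p ^ s))), ε}).IsPrincipal := fun h =>
    hne (hnil.eq_zero_of_sq_dvd_self (by simpa using sq_fst_dvd_fst_of_isPrincipal_span h))
  refine ⟨hp_eps, heps_p, fun h => ?_, hnot_principal, fun h => hnot_principal (h.principal _)⟩
  exact (h _ _).elim hp_eps heps_p
end

section
/- Let p be a prime, s a positive integer, q = p^s, R = Z_q[u]/(u^2), and n a positive integer. Let f_0, f_1, g_1 ∈ Z_q[X] with g_1 monic, and let C be the ideal of R[X]/(X^n − 1) generated by the images of f_0 + u·f_1 and u·g_1. Then there exists f_1' ∈ Z_q[X] with f_1' = 0 or deg f_1' < deg g_1 such that C is also the ideal generated by the images of f_0 + u·f_1' and u·g_1. -/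
open Polynomial

/-!
Writing `f₁ = (f₁ %ₘ g₁) + g₁ · (f₁ /ₘ g₁)` gives
`f₀ + u f₁ = (f₀ + u (f₁ %ₘ g₁)) + (u g₁) · (f₁ /ₘ g₁)`, so the first generator changes by a
multiple of the second and the ideal is unchanged. Reduction modulo a monic polynomial commutes
with base change, so it may be done over `Z_q`.
-/

namespace Polynomial

theorem modByMonic_eq_zero_or_degree_lt {R : Type*} [Ring R] (f : R[X]) {g : R[X]}
    (hg : g.Monic) : f %ₘ g = 0 ∨ (f %ₘ g).degree < g.degree := by
  nontriviality R
  exact Or.inr (degree_modByMonic_lt f hg)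

theorem span_pair_map_add_mul_modByMonic {R A : Type*} [CommRing R] [CommRing A]
    (ψ : R[X] →+* A) (a e f g : R[X]) :
    Ideal.span {ψ (a + e * f), ψ (e * g)} = Ideal.span {ψ (a + e * (f %ₘ g)), ψ (e * g)} := by
  have hsplit : a + e * f = (a + e * (f %ₘ g)) + (e * g) * (f /ₘ g) := by
    conv_lhs => rw [← modByMonic_add_div f g]
    ring
  rw [hsplit, map_add, map_mul, Ideal.span_pair_add_right_mul]

end Polynomial

theorem cyclic_code_reduce_f1_general (p s n : ℕ)
    (f₀ f₁ g₁ : Polynomial (ZMod (p ^ s))) (hg : g₁.Monic)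
    (C : Ideal (AdjoinRoot (X ^ n - 1 : Polynomial (DualNumber (ZMod (p ^ s))))))
    (hC : C = Ideal.span
      {AdjoinRoot.mk (X ^ n - 1 : Polynomial (DualNumber (ZMod (p ^ s))))
        (f₀.map (algebraMap (ZMod (p ^ s)) (DualNumber (ZMod (p ^ s)))) +
          Polynomial.C (DualNumber.eps : DualNumber (ZMod (p ^ s))) *
            f₁.map (algebraMap (ZMod (p ^ s)) (DualNumber (ZMod (p ^ s))))),
       AdjoinRoot.mk (X ^ n - 1 : Polynomial (DualNumber (ZMod (p ^ s))))
        (Polynomial.C (DualNumber.eps : DualNumber (ZMod (p ^ s))) *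
          g₁.map (algebraMap (ZMod (p ^ s)) (DualNumber (ZMod (p ^ s)))))}) :
    ∃ f₁' : Polynomial (ZMod (p ^ s)),
      (f₁' = 0 ∨ f₁'.degree < g₁.degree) ∧
      C = Ideal.span
        {AdjoinRoot.mk (X ^ n - 1 : Polynomial (DualNumber (ZMod (p ^ s))))
          (f₀.map (algebraMap (ZMod (p ^ s)) (DualNumber (ZMod (p ^ s)))) +
            Polynomial.C (DualNumber.eps : DualNumber (ZMod (p ^ s))) *
              f₁'.map (algebraMap (ZMod (p ^ s)) (DualNumber (ZMod (p ^ s))))),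
         AdjoinRoot.mk (X ^ n - 1 : Polynomial (DualNumber (ZMod (p ^ s))))
          (Polynomial.C (DualNumber.eps : DualNumber (ZMod (p ^ s))) *
            g₁.map (algebraMap (ZMod (p ^ s)) (DualNumber (ZMod (p ^ s)))))} := by
  refine ⟨f₁ %ₘ g₁, modByMonic_eq_zero_or_degree_lt f₁ hg, ?_⟩
  rw [hC, map_modByMonic _ hg]
  exact span_pair_map_add_mul_modByMonic (AdjoinRoot.mk _) _ _ _ _

/-- In a cyclic code `C = (f_0 + u·f_1, u·g_1)` with `g_1` monic, the generator
`f_1` may be reduced modulo `g_1`: there is `f_1'` with `f_1' = 0` or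
`deg f_1' < deg g_1` generating the same code. -/
theorem cyclic_code_reduce_f1 (p s n : ℕ) [Fact p.Prime] (hs : 0 < s) (hn : 0 < n)
    (f₀ f₁ g₁ : Polynomial (ZMod (p ^ s))) (hg : g₁.Monic)
    (C : Ideal (AdjoinRoot (X ^ n - 1 : Polynomial (DualNumber (ZMod (p ^ s))))))
    (hC : C = Ideal.span
      {AdjoinRoot.mk (X ^ n - 1 : Polynomial (DualNumber (ZMod (p ^ s))))
        (f₀.map (algebraMap (ZMod (p ^ s)) (DualNumber (ZMod (p ^ s)))) +
          Polynomial.C (DualNumber.eps : DualNumber (ZMod (p ^ s))) *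
            f₁.map (algebraMap (ZMod (p ^ s)) (DualNumber (ZMod (p ^ s))))),
       AdjoinRoot.mk (X ^ n - 1 : Polynomial (DualNumber (ZMod (p ^ s))))
        (Polynomial.C (DualNumber.eps : DualNumber (ZMod (p ^ s))) *
          g₁.map (algebraMap (ZMod (p ^ s)) (DualNumber (ZMod (p ^ s)))))}) :
    ∃ f₁' : Polynomial (ZMod (p ^ s)),
      (f₁' = 0 ∨ f₁'.degree < g₁.degree) ∧
      C = Ideal.span
        {AdjoinRoot.mk (X ^ n - 1 : Polynomial (DualNumber (ZMod (p ^ s))))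
          (f₀.map (algebraMap (ZMod (p ^ s)) (DualNumber (ZMod (p ^ s)))) +
            Polynomial.C (DualNumber.eps : DualNumber (ZMod (p ^ s))) *
              f₁'.map (algebraMap (ZMod (p ^ s)) (DualNumber (ZMod (p ^ s))))),
         AdjoinRoot.mk (X ^ n - 1 : Polynomial (DualNumber (ZMod (p ^ s))))
          (Polynomial.C (DualNumber.eps : DualNumber (ZMod (p ^ s))) *
            g₁.map (algebraMap (ZMod (p ^ s)) (DualNumber (ZMod (p ^ s)))))} :=
  cyclic_code_reduce_f1_general p s n f₀ f₁ g₁ hg C hC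
end

section
/- Let p be a prime, s a positive integer, q = p^s, R = Z_q[u]/(u^2), and n a positive integer. Let g ∈ R[X] be monic with g dividing X^n − 1 in R[X], and let C be the ideal of R[X]/(X^n − 1) generated by the image of g. Then the images of g, X·g, …, X^{n−deg g−1}·g form a basis of C as an R-module (in particular C is free of rank n − deg g), and the cardinality of C is q^{2(n − deg g)}. -/
/-!
If `f = g * h` with `g` a non-zero-divisor and `h` monic, then `a ↦ a * g` induces an
`R`-linear isomorphism from `R[X]/(h)` onto the ideal `(g)` of `R[X]/(f)`: it is well defined
because `f ∣ h * g`, injective because `g * h ∣ a * g` forces `h ∣ a`, and onto by construction.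
Transporting the power basis `1, x, …, x^(deg h - 1)` of `R[X]/(h)` gives the basis
`g, X g, …, X^(deg h - 1) g`, and `deg h = n - deg g` since `X^n - 1` is monic.
Over `R = Z_q[u]/(u^2)` we have `|R| = q^2`, which gives the cardinality.
-/

open Polynomial

namespace AdjoinRoot

variable {R : Type*} [CommRing R] {f g h : R[X]}

noncomputable def mulCofactor (f g : R[X]) (hh : h.Monic) : AdjoinRoot h →ₗ[R] AdjoinRoot f :=
  LinearMap.mulRight R (mk f g) ∘ₗ (aeval (root f)).toLinearMap ∘ₗ modByMonicHom hh

theorem mulCofactor_mk (hfh : f ∣ g * h) (hh : h.Monic) (a : R[X]) :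
    mulCofactor f g hh (mk h a) = mk f (a * g) := by
  rw [mulCofactor, LinearMap.comp_apply, LinearMap.comp_apply, modByMonicHom_mk,
    AlgHom.toLinearMap_apply, aeval_eq, LinearMap.mulRight_apply, ← map_mul, mk_eq_mk,
    modByMonic_eq_sub_mul_div]
  exact hfh.trans ⟨-(a /ₘ h), by ring⟩

theorem mulCofactor_injective (hfh : f = g * h) (hg : IsLeftRegular g) (hh : h.Monic) :
    Function.Injective (mulCofactor f g hh) := by
  refine (injective_iff_map_eq_zero _).mpr fun x hx => ?_
  induction x using AdjoinRoot.induction_on with | ih a => ?_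
  rw [mulCofactor_mk hfh.dvd hh, mk_eq_zero, hfh] at hx
  obtain ⟨t, ht⟩ := hx
  exact mk_eq_zero.mpr ⟨t, hg (show g * a = g * (h * t) by rw [mul_comm, ht, mul_assoc])⟩

theorem range_mulCofactor (hfh : f ∣ g * h) (hh : h.Monic) :
    LinearMap.range (mulCofactor f g hh) = (Ideal.span {mk f g}).restrictScalars R := by
  ext y
  rw [LinearMap.mem_range, Submodule.restrictScalars_mem, Ideal.mem_span_singleton',
    (mk_surjective (g := h)).exists, (mk_surjective (g := f)).exists]
  simp only [mulCofactor_mk hfh hh, map_mul]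

noncomputable def spanMkBasis (hfh : f = g * h) (hg : IsLeftRegular g) (hh : h.Monic) :
    Module.Basis (Fin h.natDegree) R ((Ideal.span {mk f g}).restrictScalars R) :=
  (powerBasis' hh).basis.map <| (LinearEquiv.ofInjective _ (mulCofactor_injective hfh hg hh)).trans
    (LinearEquiv.ofEq _ _ (range_mulCofactor hfh.dvd hh))

theorem coe_spanMkBasis_apply (hfh : f = g * h) (hg : IsLeftRegular g) (hh : h.Monic)
    (i : Fin h.natDegree) :
    (spanMkBasis hfh hg hh i : AdjoinRoot f) = mk f (X ^ (i : ℕ) * g) := by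
  change (mulCofactor f g hh ((powerBasis' hh).basis i)) = _
  -- `erw`: the basis is indexed by `Fin (powerBasis' hh).dim`, only defeq to `Fin h.natDegree`
  erw [PowerBasis.basis_eq_pow]
  rw [powerBasis'_gen, ← mk_X, ← map_pow, mulCofactor_mk hfh.dvd hh]

end AdjoinRoot

theorem DualNumber.natCard_eq (A : Type*) : Nat.card (DualNumber A) = Nat.card A ^ 2 := by
  rw [sq, ← Nat.card_prod]
  rfl

/-- If `g` is monic and divides `X^n − 1` over `R = Z_q[u]/(u^2)`, then the images
of `g, Xg, …, X^{n−deg g−1}g` form an `R`-basis of the cyclic code `C = (g)`, and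
`|C| = q^{2(n − deg g)}`. -/
theorem free_cyclic_code_basis (p s n : ℕ) [Fact p.Prime] (hs : 0 < s) (hn : 0 < n)
    (g : Polynomial (DualNumber (ZMod (p ^ s)))) (hg : g.Monic)
    (hdvd : g ∣ (X ^ n - 1 : Polynomial (DualNumber (ZMod (p ^ s)))))
    (C : Ideal (AdjoinRoot (X ^ n - 1 : Polynomial (DualNumber (ZMod (p ^ s))))))
    (hC : C = Ideal.span
      {AdjoinRoot.mk (X ^ n - 1 : Polynomial (DualNumber (ZMod (p ^ s)))) g}) :
    (∃ B : Module.Basis (Fin (n - g.natDegree)) (DualNumber (ZMod (p ^ s)))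
        (Submodule.restrictScalars (DualNumber (ZMod (p ^ s))) C),
      ∀ i : Fin (n - g.natDegree),
        (B i : AdjoinRoot (X ^ n - 1 : Polynomial (DualNumber (ZMod (p ^ s))))) =
          AdjoinRoot.mk (X ^ n - 1 : Polynomial (DualNumber (ZMod (p ^ s))))
            (X ^ (i : ℕ) * g)) ∧
    Nat.card C = (p ^ s) ^ (2 * (n - g.natDegree)) := by
  have : Fact (1 < p ^ s) := ⟨Nat.one_lt_pow hs.ne' (Fact.out : p.Prime).one_lt⟩
  obtain ⟨h, hfh⟩ := hdvd
  have hf : (X ^ n - 1 : Polynomial (DualNumber (ZMod (p ^ s)))).Monic := by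
    simpa using monic_X_pow_sub_C (1 : DualNumber (ZMod (p ^ s))) hn.ne'
  have hh : h.Monic := hg.of_mul_monic_left (hfh ▸ hf)
  have hdeg : n - g.natDegree = h.natDegree := by
    have := natDegree_X_pow_sub_C (n := n) (r := (1 : DualNumber (ZMod (p ^ s))))
    rw [C_1, hfh, hg.natDegree_mul hh] at this
    omega
  subst hC
  rw [hdeg]
  let B := AdjoinRoot.spanMkBasis hfh hg.isRegular.left hh
  refine ⟨⟨B, AdjoinRoot.coe_spanMkBasis_apply hfh hg.isRegular.left hh⟩, ?_⟩
  calc Nat.card _ = Nat.card (Fin h.natDegree → DualNumber (ZMod (p ^ s))) :=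
        Nat.card_congr B.equivFun.toEquiv
    _ = (p ^ s) ^ (2 * h.natDegree) := by
      rw [Nat.card_fun, DualNumber.natCard_eq, Nat.card_zmod, Nat.card_fin, pow_mul]
end

section
/- Let p be a prime, s a positive integer, q = p^s, R = Z_q[u]/(u^2), and n a positive integer. Let g ∈ R[X] be monic with g dividing X^n − 1 in R[X], and let C be the ideal of R[X]/(X^n − 1) generated by the image of g. Let S be a nontrivial commutative ring equipped with an injective ring homomorphism ι : R → S, and let ξ ∈ S satisfy ξ^n = 1 and be such that ξ^i − ξ^j is a unit of S for all 0 ≤ j < i < n. Suppose that for natural numbers b and δ with δ ≥ 1, the polynomial g (with coefficients mapped by ι) vanishes at ξ^{b+i} for all 0 ≤ i ≤ δ − 2. Then every nonzero codeword of C has Hamming weight at least δ; that is, for every c : Fin n → R with c ≠ 0 such that the image of ∑_{i} c_i X^i in R[X]/(X^n − 1) lies in C, the number of indices i with c_i ≠ 0 is at least δ. -/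
open Polynomial Classical

open scoped Classical

/-- BCH-type bound: if the generator `g` of a free cyclic code of length `n` over
`R = Z_q[u]/(u^2)` has `ξ^b, ξ^{b+1}, …, ξ^{b+δ−2}` among its roots (`ξ` a "basic
primitive" `n`-th root of unity in an extension `S` of `R`), then every nonzero
codeword has Hamming weight at least `δ`. -/
theorem bch_type_bound (p s n : ℕ) [Fact p.Prime] (hs : 0 < s) (hn : 0 < n)
    (g : Polynomial (DualNumber (ZMod (p ^ s)))) (hg : g.Monic)
    (hdvd : g ∣ (X ^ n - 1 : Polynomial (DualNumber (ZMod (p ^ s)))))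
    (C : Ideal (AdjoinRoot (X ^ n - 1 : Polynomial (DualNumber (ZMod (p ^ s))))))
    (hC : C = Ideal.span
      {AdjoinRoot.mk (X ^ n - 1 : Polynomial (DualNumber (ZMod (p ^ s)))) g})
    (S : Type) [CommRing S] [Nontrivial S]
    (ι : DualNumber (ZMod (p ^ s)) →+* S) (hι : Function.Injective ι)
    (ξ : S) (hξ : ξ ^ n = 1)
    (hunit : ∀ i j : ℕ, j < i → i < n → IsUnit (ξ ^ i - ξ ^ j))
    (b δ : ℕ) (hδ : 1 ≤ δ)
    (hroots : ∀ i : ℕ, i + 2 ≤ δ → (g.map ι).eval (ξ ^ (b + i)) = 0) :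
    ∀ c : Fin n → DualNumber (ZMod (p ^ s)), c ≠ 0 →
      AdjoinRoot.mk (X ^ n - 1 : Polynomial (DualNumber (ZMod (p ^ s))))
        (∑ i : Fin n, Polynomial.C (c i) * X ^ (i : ℕ)) ∈ C →
      δ ≤ (Finset.univ.filter fun i : Fin n => c i ≠ 0).card := by
  intro c hc hmem
  by_contra hcard
  push_neg at hcard
  -- Step 1 : g ∣ f
  have hgf : g ∣ ∑ i : Fin n, Polynomial.C (c i) * X ^ (i : ℕ) := by
    rw [hC, Ideal.mem_span_singleton] at hmem
    obtain ⟨z, hz⟩ := hmem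
    obtain ⟨h, rfl⟩ := AdjoinRoot.mk_surjective z
    rw [← map_mul, ← sub_eq_zero, ← map_sub, AdjoinRoot.mk_eq_zero] at hz
    have h1 := dvd_trans hdvd hz
    have h2 : g ∣ g * h := dvd_mul_right g h
    simpa using dvd_add h1 h2
  obtain ⟨h, hfh⟩ := hgf
  -- Step 2 : evaluation equations
  have heval : ∀ j : ℕ, j + 2 ≤ δ →
      ∑ i : Fin n, ι (c i) * (ξ ^ (b + j)) ^ (i : ℕ) = 0 := by
    intro j hj
    have h0 : (((∑ i : Fin n, Polynomial.C (c i) * X ^ (i : ℕ))).map ι).eval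
        (ξ ^ (b + j)) = 0 := by
      rw [hfh, Polynomial.map_mul, eval_mul, hroots j hj, zero_mul]
    simpa [Polynomial.map_sum, Polynomial.eval_finset_sum] using h0
  -- Step 3 : Vandermonde setup
  set T : Finset (Fin n) := Finset.univ.filter fun i : Fin n => c i ≠ 0 with hT
  set w : ℕ := T.card with hw
  have e : Fin w ≃ {i // i ∈ T} := T.equivFin.symm
  set v : Fin w → S := fun k => ξ ^ (((e k : Fin n) : ℕ)) with hv
  set x : Fin w → S := fun k => ι (c (e k)) * ξ ^ (b * ((e k : Fin n) : ℕ)) with hx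
  set M : Matrix (Fin w) (Fin w) S := (Matrix.vandermonde v).transpose with hM
  -- M *ᵥ x = 0
  have hMx : M.mulVec x = 0 := by
    funext j
    have hj2 : (j : ℕ) + 2 ≤ δ := by
      have := j.2
      omega
    have h0 := heval j hj2
    have hTsum : ∑ i ∈ T, ι (c i) * (ξ ^ (b + (j : ℕ))) ^ (i : ℕ) = 0 := by
      rw [← h0]
      apply Finset.sum_subset (Finset.subset_univ T)
      intro i _ hiT
      have : c i = 0 := by
        by_contra hne
        exact hiT (by simp [hT, hne])
      simp [this]
    have hre : ∀ i : Fin n,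
        ι (c i) * (ξ ^ (b + (j : ℕ))) ^ (i : ℕ)
          = (ξ ^ (i : ℕ)) ^ (j : ℕ) * (ι (c i) * ξ ^ (b * (i : ℕ))) := by
      intro i
      have hp : (ξ ^ (b + (j : ℕ))) ^ (i : ℕ)
          = ξ ^ (b * (i : ℕ)) * (ξ ^ (i : ℕ)) ^ (j : ℕ) := by
        rw [← pow_mul, ← pow_mul, ← pow_add]
        congr 1
        ring
      rw [hp]
      ring
    simp only [hre] at hTsum
    have hsum2 : ∑ k : Fin w,
        (ξ ^ ((e k : Fin n) : ℕ)) ^ (j : ℕ)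
          * (ι (c (e k)) * ξ ^ (b * ((e k : Fin n) : ℕ))) = 0 := by
      rw [← hTsum, ← Finset.sum_coe_sort T]
      exact Equiv.sum_comp e fun i : {i // i ∈ T} =>
        (ξ ^ ((i : Fin n) : ℕ)) ^ (j : ℕ) * (ι (c (i : Fin n)) * ξ ^ (b * ((i : Fin n) : ℕ)))
    simpa [hM, Matrix.mulVec, dotProduct, Matrix.vandermonde, hv, hx] using hsum2
  -- det M is a unit
  have hdet : IsUnit M.det := by
    rw [hM, Matrix.det_transpose, Matrix.det_vandermonde]
    apply Finset.prod_induction _ IsUnit (fun _ _ => IsUnit.mul) isUnit_one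
    intro i _
    apply Finset.prod_induction _ IsUnit (fun _ _ => IsUnit.mul) isUnit_one
    intro k hk
    have hik : i ≠ k := by
      intro hik
      rw [hik] at hk
      exact absurd (Finset.mem_Ioi.mp hk) (lt_irrefl k)
    have hne : ((e k : Fin n) : ℕ) ≠ ((e i : Fin n) : ℕ) := by
      intro hEq
      exact hik (e.injective (Subtype.ext (Fin.ext hEq))).symm
    rcases lt_or_gt_of_ne hne with hlt | hgt
    · have := hunit ((e i : Fin n) : ℕ) ((e k : Fin n) : ℕ) hlt (e i : Fin n).2
      simpa [hv, neg_sub] using this.neg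
    · exact hunit ((e k : Fin n) : ℕ) ((e i : Fin n) : ℕ) hgt (e k : Fin n).2
  -- hence x = 0
  have hx0 : x = 0 := by
    calc x = (1 : Matrix (Fin w) (Fin w) S).mulVec x := (Matrix.one_mulVec x).symm
      _ = (M⁻¹ * M).mulVec x := by rw [Matrix.nonsing_inv_mul M hdet]
      _ = M⁻¹.mulVec (M.mulVec x) := by rw [← Matrix.mulVec_mulVec]
      _ = M⁻¹.mulVec 0 := by rw [hMx]
      _ = 0 := Matrix.mulVec_zero _
  -- contradiction
  obtain ⟨i, hi⟩ := Function.ne_iff.mp hc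
  simp only [Pi.zero_apply] at hi
  have hiT : i ∈ T := by simp [hT, hi]
  have hk := congrFun hx0 (e.symm ⟨i, hiT⟩)
  simp only [hx, Equiv.apply_symm_apply, Pi.zero_apply] at hk
  have hξu : IsUnit (ξ ^ (b * (i : ℕ))) := by
    have : IsUnit ξ := by
      have h1 : IsUnit (ξ ^ n) := hξ ▸ isUnit_one
      exact (isUnit_pow_iff hn.ne').mp h1
    exact this.pow _
  have hci : ι (c i) = 0 := by
    obtain ⟨u, hu⟩ := hξu
    rw [← hu, Units.mul_left_eq_zero] at hk
    exact hk
  exact hi (hι (by simpa using hci))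
end
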